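/- arXiv:2211.15970 — 2 statements merged into one kernel-verified Lean document; each statement's English description precedes it below -/
import Mathlib

section
/- Let n ≥ 2 and let J₀ denote the 2n × 2n real matrix written in n × n blocks as J₀ = [[0, I_n], [−I_n, 0]], where I_n is the n × n identity matrix. Let S be the set of all real 2n × 2n matrices Z such that for every real number λ > 0 the matrix λ · Zᵀ J₀ Z has at least one irrational entry (i.e., λ Zᵀ J₀ Z is not a matrix with all entries rational). Then S is dense in the space of all real 2n × 2n matrices with its standard topology. -/
/-!
The entries of `Zᵀ J₀ Z` are the pairings `ω(Zᵢ, Zⱼ)` of the columns of `Z` under the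
nondegenerate form `ω`. If two entries have an irrational ratio, no nonzero multiple of the matrix
is rational. Moving a column `Zₖ` along a line `Zₖ + t u` changes `ω(Zᵢ, Zₖ)` affinely in `t`,
with slope `ω(Zᵢ, u) ≠ 0` for a suitable `u` once `Zᵢ ≠ 0`, and fixes the entries not involving
column `k`; so for all but countably many `t` the moved entry avoids any given countable set.
Three such moves, on three distinct columns, make `Zᵢ ≠ 0`, then `ω(Zᵢ, Zⱼ) ≠ 0`, then
`ω(Zᵢ, Zₖ) / ω(Zᵢ, Zⱼ)` irrational, by arbitrarily small perturbations.
-/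

noncomputable section

open Matrix

/-- The standard linear complex structure matrix `J₀ = [[0, Iₙ], [−Iₙ, 0]]` on `ℝ^{2n}`,
written in `n × n` blocks (so indexed by `Fin n ⊕ Fin n`). -/
def J0 (n : ℕ) : Matrix (Fin n ⊕ Fin n) (Fin n ⊕ Fin n) ℝ :=
  Matrix.fromBlocks 0 1 (-1) 0

open Set

theorem mem_closure_of_countable_compl_preimage {X : Type*} [TopologicalSpace X] {f : ℝ → X}
    (hf : Continuous f) {s : Set X} (hs : (f ⁻¹' s)ᶜ.Countable) (t : ℝ) : f t ∈ closure s :=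
  map_mem_closure (s := f ⁻¹' s) hf (by simpa using hs.dense_compl ℝ t) fun _ h => h

theorem countable_setOf_not_irrational_add_mul (r : ℝ) {d : ℝ} (hd : d ≠ 0) :
    {t : ℝ | ¬ Irrational (r + t * d)}.Countable := by
  simp only [Irrational, not_not]
  exact (countable_range ((↑) : ℚ → ℝ)).preimage <|
    (add_right_injective r).comp (mul_left_injective₀ hd)

theorem not_exists_rat_mul_eq_of_irrational_div {x y : ℝ} (h : Irrational (y / x)) {lam : ℝ}
    (hlam : lam ≠ 0) (hx : ∃ q : ℚ, lam * x = q) : ¬ ∃ q : ℚ, lam * y = q := by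
  rintro ⟨q, hq⟩
  obtain ⟨p, hp⟩ := hx
  exact h ⟨q / p, by push_cast; rw [← hp, ← hq, mul_div_mul_left _ _ hlam]⟩

namespace Matrix

theorem SeparatingLeft.exists_dotProduct_mulVec_ne_zero {m n R : Type*} [Fintype m] [Fintype n]
    [CommSemiring R] {J : Matrix m n R} (hJ : J.SeparatingLeft) {v : m → R} (hv : v ≠ 0) :
    ∃ w, v ⬝ᵥ J *ᵥ w ≠ 0 :=
  not_forall.mp (mt (separatingLeft_def.mp hJ v) hv)

variable {m ι α : Type*} [Fintype m]

theorem transpose_mul_mul_apply [NonUnitalSemiring α] (Z : Matrix m ι α) (J : Matrix m m α)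
    (i j : ι) : (Zᵀ * J * Z) i j = Zᵀ i ⬝ᵥ J *ᵥ Zᵀ j := by
  rw [Matrix.mul_assoc]
  rfl

variable [DecidableEq ι] [NonUnitalSemiring α] {Z : Matrix m ι α} {J : Matrix m m α}

theorem transpose_mul_mul_apply_updateCol_self {i j : ι} (hij : i ≠ j) (v : m → α) :
    ((Z.updateCol j v)ᵀ * J * Z.updateCol j v) i j = Zᵀ i ⬝ᵥ J *ᵥ v := by
  rw [transpose_mul_mul_apply, ← updateRow_transpose, updateRow_self, updateRow_ne hij]

theorem transpose_mul_mul_apply_updateCol_of_ne {i j k : ι} (hij : i ≠ j) (hkj : k ≠ j)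
    (v : m → α) : ((Z.updateCol j v)ᵀ * J * Z.updateCol j v) i k = (Zᵀ * J * Z) i k := by
  rw [transpose_mul_mul_apply, transpose_mul_mul_apply, ← updateRow_transpose,
    updateRow_ne hij, updateRow_ne hkj]

end Matrix

section ColumnPerturbation

variable {m ι : Type*} [DecidableEq ι]

theorem mem_closure_of_countable_updateCol {s : Set (Matrix m ι ℝ)} (Z : Matrix m ι ℝ) (j : ι)
    (u : m → ℝ) (hs : {t : ℝ | Z.updateCol j (Zᵀ j + t • u) ∉ s}.Countable) : Z ∈ closure s := by
  have hf : Continuous fun t : ℝ => Z.updateCol j (Zᵀ j + t • u) := by fun_prop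
  convert mem_closure_of_countable_compl_preimage hf hs 0
  rw [zero_smul, add_zero]
  exact (updateCol_eq_self Z j).symm

theorem mem_closure_setOf_transpose_apply_ne_zero [Nonempty m] (Z : Matrix m ι ℝ) (i : ι) :
    Z ∈ closure {Z : Matrix m ι ℝ | Zᵀ i ≠ 0} := by
  refine mem_closure_of_countable_updateCol Z i 1 ?_
  simp only [mem_ofPred_eq, ← updateRow_transpose, updateRow_self, not_not]
  exact (countable_singleton 0).preimage
    ((add_right_injective _).comp (smul_left_injective ℝ one_ne_zero))

variable [Fintype m] {J : Matrix m m ℝ}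

theorem mem_closure_setOf_transpose_mul_mul_apply_ne_zero (hJ : J.SeparatingLeft) {i j : ι}
    (hij : i ≠ j) {Z : Matrix m ι ℝ} (hZ : Zᵀ i ≠ 0) :
    Z ∈ closure {Z : Matrix m ι ℝ | (Zᵀ * J * Z) i j ≠ 0} := by
  obtain ⟨u, hu⟩ := hJ.exists_dotProduct_mulVec_ne_zero hZ
  refine mem_closure_of_countable_updateCol Z j u ?_
  simp only [mem_ofPred_eq, transpose_mul_mul_apply_updateCol_self hij, mulVec_add, mulVec_smul,
    dotProduct_add, dotProduct_smul, smul_eq_mul, not_not]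
  exact (countable_singleton 0).preimage ((add_right_injective _).comp (mul_left_injective₀ hu))

theorem mem_closure_setOf_irrational_div (hJ : J.SeparatingLeft) {i j k : ι} (hik : i ≠ k)
    (hjk : j ≠ k) {Z : Matrix m ι ℝ} (hZ : (Zᵀ * J * Z) i j ≠ 0) :
    Z ∈ closure {Z : Matrix m ι ℝ | Irrational ((Zᵀ * J * Z) i k / (Zᵀ * J * Z) i j)} := by
  have ha : Zᵀ i ≠ 0 := fun h => hZ (by simp [transpose_mul_mul_apply, h])
  obtain ⟨u, hu⟩ := hJ.exists_dotProduct_mulVec_ne_zero ha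
  refine mem_closure_of_countable_updateCol Z k u ?_
  simp only [mem_ofPred_eq, transpose_mul_mul_apply_updateCol_self hik,
    transpose_mul_mul_apply_updateCol_of_ne hik hjk, mulVec_add, mulVec_smul, dotProduct_add,
    dotProduct_smul, smul_eq_mul, add_div, mul_div_assoc]
  exact countable_setOf_not_irrational_add_mul _ (div_ne_zero hu hZ)

theorem dense_setOf_forall_pos_smul_not_rational [Nonempty m] (hJ : J.SeparatingLeft)
    {i j k : ι} (hij : i ≠ j) (hik : i ≠ k) (hjk : j ≠ k) :
    Dense {Z : Matrix m ι ℝ |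
      ∀ lam : ℝ, 0 < lam → ¬ ∀ a b, ∃ q : ℚ, (lam • (Zᵀ * J * Z)) a b = q} := by
  have hsub : {Z : Matrix m ι ℝ | Irrational ((Zᵀ * J * Z) i k / (Zᵀ * J * Z) i j)} ⊆
      {Z | ∀ lam : ℝ, 0 < lam → ¬ ∀ a b, ∃ q : ℚ, (lam • (Zᵀ * J * Z)) a b = q} :=
    fun Z hZ lam hlam hall =>
      not_exists_rat_mul_eq_of_irrational_div hZ hlam.ne' (hall i j) (hall i k)
  have h2 : {Z : Matrix m ι ℝ | Zᵀ i ≠ 0} ⊆ closure {Z | (Zᵀ * J * Z) i j ≠ 0} :=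
    fun Z hZ => mem_closure_setOf_transpose_mul_mul_apply_ne_zero hJ hij hZ
  have h3 : {Z : Matrix m ι ℝ | (Zᵀ * J * Z) i j ≠ 0} ⊆
      closure {Z | Irrational ((Zᵀ * J * Z) i k / (Zᵀ * J * Z) i j)} :=
    fun Z hZ => mem_closure_setOf_irrational_div hJ hik hjk hZ
  intro Z
  exact closure_mono hsub <| closure_minimal h3 isClosed_closure <|
    closure_minimal h2 isClosed_closure <| mem_closure_setOf_transpose_apply_ne_zero Z i

end ColumnPerturbation

theorem J0_eq_transpose_J (n : ℕ) : J0 n = (J (Fin n) ℝ)ᵀ := by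
  simp [J0, J, fromBlocks_transpose]

/-- The set of real `2n × 2n` matrices `Z` (`n ≥ 2`) such that `λ Zᵀ J₀ Z` has an irrational
entry for every `λ > 0` is dense in the space of all real `2n × 2n` matrices. -/
theorem stmt5 (n : ℕ) (hn : 2 ≤ n) :
    Dense {Z : Matrix (Fin n ⊕ Fin n) (Fin n ⊕ Fin n) ℝ |
      ∀ lam : ℝ, 0 < lam →
        ¬ ∀ i j, ∃ q : ℚ, (lam • (Zᵀ * J0 n * Z)) i j = (q : ℝ)} := by
  have hJ : (J0 n).SeparatingLeft := (nondegenerate_of_det_ne_zero <| by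
    rw [J0_eq_transpose_J, det_transpose]; exact (isUnit_det_J _ _).ne_zero).separatingLeft
  have : Nonempty (Fin n ⊕ Fin n) := ⟨.inl ⟨0, by omega⟩⟩
  exact dense_setOf_forall_pos_smul_not_rational hJ (i := .inl ⟨0, by omega⟩)
    (j := .inr ⟨0, by omega⟩) (k := .inl ⟨1, hn⟩) (by simp) (by simp) (by simp)

end
end

section
/- For all real numbers r, ε > 0 there exists c₀ > 0 such that for every c ∈ (0, c₀) there exists σ₀ > 0 such that for every σ ∈ (0, σ₀) the functions F(s) = s² − r² − σ and G(s) = c·s² + r²·log(s²/r²), defined for s ∈ (0, r + ε], satisfy: there exist s₁ and s₂ with 0 < s₁ < r < s₂ < r + ε such that F(s₁) = G(s₁), F(s₂) = G(s₂), F(s) > G(s) for all s ∈ (0, s₁), F(s) < G(s) for all s ∈ (s₁, s₂), and F(s) > G(s) for all s ∈ (s₂, r + ε]. In particular, F and G coincide at exactly the two points s₁ and s₂ of (0, r + ε]. -/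
set_option maxHeartbeats 1000000

/-- The one-variable gluing lemma from the construction of the symplectic blow-up form:
for all `r, ε > 0` and all sufficiently small `c > 0` and `σ > 0`, the functions
`F s = s² − r² − σ` and `G s = c s² + r² log(s²/r²)` cross exactly twice on `(0, r+ε]`,
once below `r` and once above `r`, with the prescribed order relations. -/
theorem stmt9 (r ε : ℝ) (hr : 0 < r) (hε : 0 < ε) :
    ∃ c₀ > 0, ∀ c : ℝ, 0 < c → c < c₀ →
      ∃ σ₀ > 0, ∀ σ : ℝ, 0 < σ → σ < σ₀ →
        ∃ s₁ s₂ : ℝ, 0 < s₁ ∧ s₁ < r ∧ r < s₂ ∧ s₂ < r + ε ∧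
          (s₁ ^ 2 - r ^ 2 - σ = c * s₁ ^ 2 + r ^ 2 * Real.log (s₁ ^ 2 / r ^ 2)) ∧
          (s₂ ^ 2 - r ^ 2 - σ = c * s₂ ^ 2 + r ^ 2 * Real.log (s₂ ^ 2 / r ^ 2)) ∧
          (∀ s : ℝ, 0 < s → s < s₁ →
            s ^ 2 - r ^ 2 - σ > c * s ^ 2 + r ^ 2 * Real.log (s ^ 2 / r ^ 2)) ∧
          (∀ s : ℝ, s₁ < s → s < s₂ →
            s ^ 2 - r ^ 2 - σ < c * s ^ 2 + r ^ 2 * Real.log (s ^ 2 / r ^ 2)) ∧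
          (∀ s : ℝ, s₂ < s → s ≤ r + ε →
            s ^ 2 - r ^ 2 - σ > c * s ^ 2 + r ^ 2 * Real.log (s ^ 2 / r ^ 2)) ∧
          (∀ s : ℝ, 0 < s → s ≤ r + ε →
            (s ^ 2 - r ^ 2 - σ = c * s ^ 2 + r ^ 2 * Real.log (s ^ 2 / r ^ 2) ↔
              s = s₁ ∨ s = s₂)) := by
  have hre : 0 < r + ε := by linarith
  set A : ℝ := (r + ε) ^ 2 - r ^ 2 - r ^ 2 * Real.log ((r + ε) ^ 2 / r ^ 2) with hA
  clear_value A
  have hA_pos : 0 < A := by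
    have hx : (1 : ℝ) < (r + ε) ^ 2 / r ^ 2 := by
      rw [lt_div_iff₀ (by positivity)]
      nlinarith
    have := Real.log_lt_sub_one_of_pos (by linarith : (0:ℝ) < (r + ε) ^ 2 / r ^ 2)
      (by linarith : (r + ε) ^ 2 / r ^ 2 ≠ 1)
    have h2 : r ^ 2 * Real.log ((r + ε) ^ 2 / r ^ 2) <
        r ^ 2 * ((r + ε) ^ 2 / r ^ 2 - 1) := by
      exact mul_lt_mul_of_pos_left this (by positivity)
    have h3 : r ^ 2 * ((r + ε) ^ 2 / r ^ 2 - 1) = (r + ε) ^ 2 - r ^ 2 := by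
      field_simp
    rw [hA]; linarith [h2, h3.symm ▸ h2]
  refine ⟨min (1/2) (A / (2 * (r + ε) ^ 2)), by positivity, ?_⟩
  intro c hc hcc
  have hc2 : c < 1/2 := lt_of_lt_of_le hcc (min_le_left _ _)
  have hcA : c < A / (2 * (r + ε) ^ 2) := lt_of_lt_of_le hcc (min_le_right _ _)
  have hcA' : c * (r + ε) ^ 2 < A / 2 := by
    rw [lt_div_iff₀ (by positivity)] at hcA
    nlinarith
  refine ⟨A - c * (r + ε) ^ 2, by linarith, ?_⟩
  intro σ hσ hσ0
  -- The difference function H = F - G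
  set H : ℝ → ℝ := fun s =>
    (1 - c) * s ^ 2 - r ^ 2 - σ - 2 * r ^ 2 * Real.log s + 2 * r ^ 2 * Real.log r with hHdef
  -- conversion: for s > 0, F s - G s = H s
  have hconv : ∀ s : ℝ, 0 < s →
      s ^ 2 - r ^ 2 - σ - (c * s ^ 2 + r ^ 2 * Real.log (s ^ 2 / r ^ 2)) = H s := by
    intro s hs
    have hlog : Real.log (s ^ 2 / r ^ 2) = 2 * Real.log s - 2 * Real.log r := by
      rw [Real.log_div (by positivity) (by positivity), Real.log_pow, Real.log_pow]
      push_cast; ring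
    rw [hlog, hHdef]; ring
  -- derivative of H
  have hd : ∀ s : ℝ, s ≠ 0 → HasDerivAt H ((1 - c) * (2 * s) - 2 * r ^ 2 * s⁻¹) s := by
    intro s hs
    have h1 : HasDerivAt (fun s : ℝ => s ^ 2) (2 * s) s := by
      simpa using hasDerivAt_pow 2 s
    have h2 : HasDerivAt Real.log s⁻¹ s := Real.hasDerivAt_log hs
    exact ((((h1.const_mul (1 - c)).sub_const (r ^ 2)).sub_const σ).sub
      (h2.const_mul (2 * r ^ 2))).add_const (2 * r ^ 2 * Real.log r)
  clear_value H
  have hc1 : (0:ℝ) < 1 - c := by linarith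
  set m : ℝ := r / Real.sqrt (1 - c) with hm
  clear_value m
  have hsq_pos : 0 < Real.sqrt (1 - c) := Real.sqrt_pos.mpr hc1
  have hsq_sq : Real.sqrt (1 - c) ^ 2 = 1 - c := Real.sq_sqrt hc1.le
  have hsq_lt1 : Real.sqrt (1 - c) < 1 := by
    have := Real.sqrt_lt_sqrt hc1.le (by linarith : 1 - c < 1)
    simpa using this
  have hm_pos : 0 < m := by rw [hm]; positivity
  have hrm : r < m := by
    rw [hm, lt_div_iff₀ hsq_pos]
    nlinarith
  -- characterization of s vs m
  have hlt_m : ∀ s : ℝ, 0 < s → s < m → (1 - c) * s ^ 2 < r ^ 2 := by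
    intro s hs hsm
    rw [hm, lt_div_iff₀ hsq_pos] at hsm
    have hnn : 0 ≤ s * Real.sqrt (1 - c) := by positivity
    have h2 : (s * Real.sqrt (1 - c)) ^ 2 < r ^ 2 := by nlinarith
    calc (1 - c) * s ^ 2 = (s * Real.sqrt (1 - c)) ^ 2 := by rw [mul_pow, hsq_sq]; ring
      _ < r ^ 2 := h2
  have hgt_m : ∀ s : ℝ, m < s → r ^ 2 < (1 - c) * s ^ 2 := by
    intro s hsm
    rw [hm, div_lt_iff₀ hsq_pos] at hsm
    have hs : 0 < s := lt_trans hm_pos (by rwa [hm, div_lt_iff₀ hsq_pos])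
    have h2 : r ^ 2 < (s * Real.sqrt (1 - c)) ^ 2 := by nlinarith
    calc r ^ 2 < (s * Real.sqrt (1 - c)) ^ 2 := h2
      _ = (1 - c) * s ^ 2 := by rw [mul_pow, hsq_sq]; ring
  -- strict antitone on Ioc 0 m
  have hanti : StrictAntiOn H (Set.Ioc 0 m) := by
    apply strictAntiOn_of_deriv_neg (convex_Ioc 0 m)
    · intro x hx
      exact (hd x (ne_of_gt hx.1)).differentiableAt.continuousAt.continuousWithinAt
    · intro x hx
      rw [interior_Ioc] at hx
      rw [(hd x (ne_of_gt hx.1)).deriv]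
      have h := hlt_m x hx.1 hx.2
      have hx0 : 0 < x := hx.1
      rw [sub_neg, mul_comm (2 * r ^ 2) x⁻¹, ← div_eq_inv_mul, lt_div_iff₀ hx0]
      nlinarith
  -- strict monotone on Ici m
  have hmono : StrictMonoOn H (Set.Ici m) := by
    apply strictMonoOn_of_deriv_pos (convex_Ici m)
    · intro x hx
      have : 0 < x := lt_of_lt_of_le hm_pos hx
      exact (hd x (ne_of_gt this)).differentiableAt.continuousAt.continuousWithinAt
    · intro x hx
      rw [interior_Ici] at hx
      have hx0 : 0 < x := lt_trans hm_pos hx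
      rw [(hd x (ne_of_gt hx0)).deriv]
      have h := hgt_m x hx
      rw [sub_pos, mul_comm (2 * r ^ 2) x⁻¹, ← div_eq_inv_mul, div_lt_iff₀ hx0]
      nlinarith
  -- values of H
  have hHr : H r = -(c * r ^ 2) - σ := by simp only [hHdef]; ring
  have hHr_neg : H r < 0 := by rw [hHr]; nlinarith
  have hHre : H (r + ε) = A - c * (r + ε) ^ 2 - σ := by
    have hlog : Real.log ((r + ε) ^ 2 / r ^ 2) = 2 * Real.log (r + ε) - 2 * Real.log r := by
      rw [Real.log_div (by positivity) (by positivity), Real.log_pow, Real.log_pow]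
      push_cast; ring
    simp only [hHdef, hA, hlog]; ring
  have hHre_pos : 0 < H (r + ε) := by rw [hHre]; linarith
  -- m < r + ε
  have hmre : m < r + ε := by
    by_contra hcon
    push_neg at hcon
    have h1 : H (r + ε) < H r :=
      hanti ⟨hr, le_trans (by linarith) hcon⟩ ⟨hre, hcon⟩ (by linarith)
    linarith
  have hHm_neg : H m < 0 := by
    have : H m < H r := hanti ⟨hr, hrm.le⟩ ⟨hm_pos, le_refl m⟩ hrm
    linarith
  -- small δ with H δ > 0
  set δ : ℝ := r * Real.exp (-(r ^ 2 + σ) / (2 * r ^ 2) - 1) with hδdef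
  clear_value δ
  have hδ_pos : 0 < δ := by rw [hδdef]; positivity
  have hδr : δ < r := by
    have : Real.exp (-(r ^ 2 + σ) / (2 * r ^ 2) - 1) < 1 := by
      rw [Real.exp_lt_one_iff]
      have h1 : 0 < (r ^ 2 + σ) / (2 * r ^ 2) := by positivity
      have h2 : -(r ^ 2 + σ) / (2 * r ^ 2) = -((r ^ 2 + σ) / (2 * r ^ 2)) := by ring
      linarith
    nlinarith
  have hHδ_pos : 0 < H δ := by
    have hlogδ : Real.log δ = Real.log r + (-(r ^ 2 + σ) / (2 * r ^ 2) - 1) := by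
      rw [hδdef, Real.log_mul (ne_of_gt hr) (Real.exp_ne_zero _), Real.log_exp]
    simp only [hHdef]
    rw [hlogδ]
    have hr2 : r ^ 2 ≠ 0 := by positivity
    have : 2 * r ^ 2 * (-(r ^ 2 + σ) / (2 * r ^ 2)) = -(r ^ 2 + σ) := by
      field_simp
    nlinarith [sq_nonneg δ]
  -- IVT for s₁ on (δ, r)
  have hcont1 : ContinuousOn H (Set.Icc δ r) := by
    intro x hx
    have : 0 < x := lt_of_lt_of_le hδ_pos hx.1
    exact (hd x (ne_of_gt this)).differentiableAt.continuousAt.continuousWithinAt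
  have h0mem1 : (0:ℝ) ∈ Set.Ioo (H r) (H δ) := ⟨hHr_neg, hHδ_pos⟩
  obtain ⟨s₁, hs₁mem, hHs₁⟩ := intermediate_value_Ioo' hδr.le hcont1 h0mem1
  -- IVT for s₂ on (m, r+ε)
  have hcont2 : ContinuousOn H (Set.Icc m (r + ε)) := by
    intro x hx
    have : 0 < x := lt_of_lt_of_le hm_pos hx.1
    exact (hd x (ne_of_gt this)).differentiableAt.continuousAt.continuousWithinAt
  have h0mem2 : (0:ℝ) ∈ Set.Ioo (H m) (H (r + ε)) := ⟨hHm_neg, hHre_pos⟩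
  obtain ⟨s₂, hs₂mem, hHs₂⟩ := intermediate_value_Ioo hmre.le hcont2 h0mem2
  have hs₁_pos : 0 < s₁ := lt_trans hδ_pos hs₁mem.1
  have hs₁r : s₁ < r := hs₁mem.2
  have hs₂m : m < s₂ := hs₂mem.1
  have hrs₂ : r < s₂ := lt_trans hrm hs₂m
  have hs₂re : s₂ < r + ε := hs₂mem.2
  have hs₁m : s₁ < m := lt_trans hs₁r hrm
  -- sign lemmas
  have P1 : ∀ s : ℝ, 0 < s → s < s₁ → 0 < H s := by
    intro s hs hss₁
    have := hanti ⟨hs, by linarith⟩ ⟨hs₁_pos, hs₁m.le⟩ hss₁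
    rw [hHs₁] at this; linarith
  have P2 : ∀ s : ℝ, s₁ < s → s < s₂ → H s < 0 := by
    intro s hs₁s hss₂
    rcases le_or_gt s m with hsm | hsm
    · have := hanti ⟨hs₁_pos, hs₁m.le⟩ ⟨lt_trans hs₁_pos hs₁s, hsm⟩ hs₁s
      rw [hHs₁] at this; linarith
    · have := hmono (Set.mem_Ici.mpr hsm.le) (Set.mem_Ici.mpr hs₂m.le) hss₂
      rw [hHs₂] at this; linarith
  have P3 : ∀ s : ℝ, s₂ < s → 0 < H s := by
    intro s hs₂s
    have := hmono (Set.mem_Ici.mpr hs₂m.le) (Set.mem_Ici.mpr (by linarith : m ≤ s)) hs₂s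
    rw [hHs₂] at this; linarith
  refine ⟨s₁, s₂, hs₁_pos, hs₁r, hrs₂, hs₂re, ?_, ?_, ?_, ?_, ?_, ?_⟩
  · have := hconv s₁ hs₁_pos; rw [hHs₁] at this; linarith
  · have := hconv s₂ (lt_trans hr hrs₂); rw [hHs₂] at this; linarith
  · intro s hs hss₁
    have h := P1 s hs hss₁
    have := hconv s hs; linarith
  · intro s hs₁s hss₂
    have h := P2 s hs₁s hss₂
    have := hconv s (lt_trans hs₁_pos hs₁s); linarith
  · intro s hs₂s _
    have h := P3 s hs₂s
    have := hconv s (lt_trans (lt_trans hr hrs₂) hs₂s); linarith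
  · intro s hs hsre
    constructor
    · intro heq
      have hH0 : H s = 0 := by
        have := hconv s hs; linarith
      rcases lt_trichotomy s s₁ with h | h | h
      · have := P1 s hs h; linarith
      · exact Or.inl h
      · rcases lt_trichotomy s s₂ with h' | h' | h'
        · have := P2 s h h'; linarith
        · exact Or.inr h'
        · have := P3 s h'; linarith
    · rintro (rfl | rfl)
      · have := hconv s hs; rw [hHs₁] at this; linarith
      · have := hconv s hs; rw [hHs₂] at this; linarith
end
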